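/- arXiv:2110.15848 — 4 statements merged into one kernel-verified Lean document; each statement's English description precedes it below -/
import Mathlib

section
/- Every scaffold of order \(\ell \geq 1\) on a weakly connected digraph whose edge weights lie in the Bose–Mesner algebra of a translation association scheme belongs to \(\mathbb{C}^\Gamma\): writing \(\mathsf{S} = \sum_{\boldsymbol{\varepsilon} \in (X^*)^\ell} c_{\boldsymbol{\varepsilon}} \hat{\boldsymbol{\varepsilon}}\) in the character tensor basis, one has \(c_{\boldsymbol{\varepsilon}} = 0\) unless \(\varepsilon_1 \cdots \varepsilon_\ell = \iota\). -/
open scoped ComplexConjugate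

/-- Every scaffold of order `ℓ ≥ 1` on a weakly connected digraph
`G = (V, E)` whose edge weights lie in the Bose–Mesner algebra of a translation
association scheme on a finite abelian group `X` (equivalently: each weight
`w e : Matrix X X ℂ` is translation-invariant) belongs to `ℂ^Γ`: writing
`S = ∑ ε, c ε • ε̂` in the character tensor basis, the coefficient
`c ε = ⟨ε̂₁ ⊗ ⋯ ⊗ ε̂_ℓ, S⟩ = ∑ x, (∏ i, |X|^{-1/2} εᵢ(xᵢ)) * S x`
vanishes unless `ε₁ ⋯ ε_ℓ = 1`. -/
theorem stmt_12 (X : Type*) [CommGroup X] [Fintype X] [DecidableEq X]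
    (V E : Type*) [Fintype V] [Fintype E] [DecidableEq V]
    (ℓ : ℕ) [NeZero ℓ] (hl : 1 ≤ ℓ)
    (eh et : E → V) (r : Fin ℓ → V)
    (hconn : ∀ a b : V, Relation.ReflTransGen
      (fun u w => ∃ e, (et e = u ∧ eh e = w) ∨ (et e = w ∧ eh e = u)) a b)
    (w : E → Matrix X X ℂ)
    (hw : ∀ (e : E) (z x y : X), w e (x * z) (y * z) = w e x y)
    (Sc : (Fin ℓ → X) → ℂ)
    (hSc : ∀ xv, Sc xv = ∑ σ : V → X,
      (∏ e, w e (σ (et e)) (σ (eh e))) * ∏ i, (if σ (r i) = xv i then (1 : ℂ) else 0))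
    (ε : Fin ℓ → (X →* ℂˣ)) (hε : ∏ i, ε i ≠ 1) :
    ∑ xv : Fin ℓ → X,
      (∏ i, (Real.sqrt (Fintype.card X) : ℂ)⁻¹ * (((ε i) (xv i) : ℂˣ) : ℂ)) * Sc xv
      = 0 := by
  classical
  -- Find `z` where the product character is nontrivial.
  obtain ⟨z, hz⟩ : ∃ z : X, (∏ i, ε i) z ≠ 1 := by
    by_contra h
    push_neg at h
    exact hε (MonoidHom.ext fun z => by simpa using h z)
  have hz' : (((∏ i, ε i) z : ℂˣ) : ℂ) ≠ 1 := by
    intro h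
    exact hz (Units.ext (by simpa using h))
  set c : ℂ := (Real.sqrt (Fintype.card X) : ℂ)⁻¹ with hc
  set a : ℂ := (((∏ i, ε i) z : ℂˣ) : ℂ) with ha
  have ha' : a = ∏ i, (((ε i) z : ℂˣ) : ℂ) := by
    rw [ha, MonoidHom.finset_prod_apply]
    exact map_prod (Units.coeHom ℂ) _ _
  set T : ℂ := ∑ xv : Fin ℓ → X,
      (∏ i, c * (((ε i) (xv i) : ℂˣ) : ℂ)) * Sc xv with hT
  -- Translation invariance of the scaffold function.
  have hScz : ∀ xv : Fin ℓ → X, Sc (fun i => xv i * z) = Sc xv := by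
    intro xv
    rw [hSc, hSc]
    refine (Fintype.sum_equiv
      ({ toFun := fun σ v => σ v * z
         invFun := fun σ v => σ v * z⁻¹
         left_inv := fun σ => by funext v; simp
         right_inv := fun σ => by funext v; simp } :
        (V → X) ≃ (V → X)) _ _ ?_).symm
    intro σ
    simp only [Equiv.coe_fn_mk]
    congr 1
    · exact Finset.prod_congr rfl fun e _ => (hw e z _ _).symm
    · refine Finset.prod_congr rfl fun i _ => ?_
      simp [mul_left_cancel_iff]
  -- Key identity: a * T = T.
  have key : a * T = T := by
    rw [hT, Finset.mul_sum]
    refine Fintype.sum_equiv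
      ({ toFun := fun xv i => xv i * z
         invFun := fun xv i => xv i * z⁻¹
         left_inv := fun xv => by funext i; simp
         right_inv := fun xv => by funext i; simp } :
        (Fin ℓ → X) ≃ (Fin ℓ → X)) _ _ ?_
    intro xv
    simp only [Equiv.coe_fn_mk]
    rw [hScz xv]
    rw [show (∏ i, c * (((ε i) (xv i * z) : ℂˣ) : ℂ))
        = a * ∏ i, c * (((ε i) (xv i) : ℂˣ) : ℂ) by
      rw [ha', ← Finset.prod_mul_distrib]
      refine Finset.prod_congr rfl fun i _ => ?_
      push_cast [map_mul]
      ring]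
    ring
  have h1 : (a - 1) * T = 0 := by
    rw [sub_mul, one_mul, key, sub_self]
  rcases mul_eq_zero.mp h1 with h | h
  · exact absurd (by linear_combination h) hz'
  · exact h
end

section
/- Fourier expansion of a scaffold for a translation scheme: with notation as in the context, for a scaffold \(\mathsf{S}\) of order \(\ell \geq 1\) on a digraph G = (V,E) with n nodes, m edges, roots \(r_1,\dots,r_\ell\), and edge weights \(w(e) = A_{e^\lambda}\), one has \(\mathsf{S} = |X|^{\,n - m - \ell/2} \sum_{\tau \in (X^*)^E} \Big(\prod_{e \in E} P_{e^\tau, e^\lambda}\Big) \Big(\prod_{v \in V\setminus R} \delta_{v^\tau, \iota}\Big)\, \widehat{\boldsymbol{r}^\tau}\), where \(\boldsymbol{r}^\tau = (r_1^\tau, \dots, r_\ell^\tau)\) and \(v^\tau = (\prod_{h(e)=v} e^\tau)^{-1}\prod_{t(e)=v} e^\tau\). -/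
open scoped ComplexConjugate

private lemma aux_conj {X : Type*} [CommGroup X] [Fintype X] (ε : X →* ℂˣ) (x : X) :
    conj ((ε x : ℂˣ) : ℂ) = (((ε x)⁻¹ : ℂˣ) : ℂ) := by
  have h1 : ((ε x : ℂˣ) : ℂ) ^ Fintype.card X = 1 := by
    rw [← Units.val_pow_eq_pow_val, ← map_pow, pow_card_eq_one, map_one, Units.val_one]
  have h2 : ‖((ε x : ℂˣ) : ℂ)‖ = 1 :=
    Complex.norm_eq_one_of_pow_eq_one h1 Fintype.card_ne_zero
  rw [← Complex.inv_eq_conj h2, Units.val_inv_eq_inv_val]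

private lemma aux_sum {X : Type*} [CommGroup X] [Fintype X] (ε : X →* ℂˣ) :
    ∑ x : X, ((ε x : ℂˣ) : ℂ) = if ε = 1 then (Fintype.card X : ℂ) else 0 := by
  split_ifs with h
  · subst h; simp
  · obtain ⟨y, hy⟩ : ∃ y, ε y ≠ 1 := by
      by_contra hc; push_neg at hc
      exact h (MonoidHom.ext fun z => by simp [hc z])
    have key : ((ε y : ℂˣ) : ℂ) * ∑ x : X, ((ε x : ℂˣ) : ℂ) = ∑ x : X, ((ε x : ℂˣ) : ℂ) := by
      rw [Finset.mul_sum]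
      exact Fintype.sum_bijective (fun x => y * x) (Group.mulLeft_bijective y) _ _
        (fun x => by rw [← Units.val_mul, ← map_mul])
    have h0 : (((ε y : ℂˣ) : ℂ) - 1) * ∑ x : X, ((ε x : ℂˣ) : ℂ) = 0 := by
      rw [sub_mul, one_mul, key, sub_self]
    rcases mul_eq_zero.1 h0 with h' | h'
    · exact absurd (Units.ext (sub_eq_zero.1 h')) hy
    · exact h'

private lemma aux_factor {X V : Type*} [Fintype X] [Fintype V] [DecidableEq V] [DecidableEq X]
    {ℓ : ℕ} (r : Fin ℓ → V) (hr : Function.Injective r) (xv : Fin ℓ → X)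
    (f : V → X → ℂ) :
    ∑ σ : V → X, (∏ v, f v (σ v)) * ∏ i, (if σ (r i) = xv i then (1 : ℂ) else 0)
      = (∏ v ∈ Finset.univ.filter fun v => ¬∃ i, r i = v, ∑ x, f v x) *
        ∏ i, f (r i) (xv i) := by
  classical
  set d : V → X → ℂ := fun v x =>
    if h : ∃ i, r i = v then (if x = xv h.choose then 1 else 0) else 1 with hd_def
  have himg : (Finset.univ.filter fun v => ∃ i, r i = v) = Finset.image r Finset.univ := by
    ext v; simp
  have hdr : ∀ (i : Fin ℓ) (x : X), d (r i) x = if x = xv i then (1 : ℂ) else 0 := by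
    intro i x
    have h : ∃ j, r j = r i := ⟨i, rfl⟩
    have hch : h.choose = i := hr h.choose_spec
    simp only [hd_def, dif_pos h, hch]
  have hdn : ∀ v, (¬∃ i, r i = v) → ∀ x, d v x = 1 := by
    intro v hv x; simp only [hd_def, dif_neg hv]
  have claimA : ∀ σ : V → X,
      (∏ v, f v (σ v)) * ∏ i, (if σ (r i) = xv i then (1 : ℂ) else 0)
        = ∏ v, f v (σ v) * d v (σ v) := by
    intro σ
    rw [Finset.prod_mul_distrib]
    congr 1
    rw [← Finset.prod_filter_mul_prod_filter_not Finset.univ (fun v => ∃ i, r i = v)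
      (fun v => d v (σ v))]
    rw [Finset.prod_congr rfl (fun v hv => hdn v (Finset.mem_filter.1 hv).2 (σ v)),
      Finset.prod_const_one, mul_one, himg,
      Finset.prod_image (fun i _ j _ h => hr h)]
    exact (Finset.prod_congr rfl fun i _ => (hdr i (σ (r i)))).symm
  have key : (∏ v, ∑ x, f v x * d v x) = ∑ σ : V → X, ∏ v, f v (σ v) * d v (σ v) :=
    Fintype.prod_sum (fun v x => f v x * d v x)
  rw [Finset.sum_congr rfl fun (σ : V → X) _ => claimA σ, ← key,
    ← Finset.prod_filter_mul_prod_filter_not Finset.univ (fun v => ∃ i, r i = v)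
      (fun v => ∑ x, f v x * d v x), mul_comm]
  congr 1
  · exact Finset.prod_congr rfl fun v hv => Finset.sum_congr rfl fun x _ => by
      rw [hdn v (Finset.mem_filter.1 hv).2 x, mul_one]
  · rw [himg, Finset.prod_image (fun i _ j _ h => hr h)]
    refine Finset.prod_congr rfl fun i _ => ?_
    simp_rw [hdr i, mul_ite, mul_one, mul_zero]
    rw [Finset.sum_ite_eq' Finset.univ (xv i) (fun x => f (r i) x), if_pos (Finset.mem_univ _)]

/-- (Fourier expansion of a scaffold for a translation scheme.)
Let `(X, R)` be a translation association scheme on a finite abelian group `X`, with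
adjacency matrices expanded in characters as
`(A i) x y = |X|⁻¹ ∑ ε, Pch ε i * conj (ε x) * ε y` (so `Pch ε i = P_{j,i}` for
`ε ∈ X_j^*`). For a scaffold `S` of order `ℓ ≥ 1` on a digraph `G = (V, E)` with `n`
nodes, `m` edges, distinct roots `r 1, …, r ℓ`, and edge weights `A (lam e)`, one has
`S = |X|^{n - m - ℓ/2} ∑_{τ : E → X^*} (∏ e, Pch (τ e) (lam e))
      (∏_{v ∉ R} δ_{v^τ, 1}) r̂^τ`,
where `v^τ = (∏_{eh e = v} τ e)⁻¹ ∏_{et e = v} τ e` and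
`r̂^τ = (r 1)^τ-hat ⊗ ⋯ ⊗ (r ℓ)^τ-hat`, with `ε̂ x = |X|^{-1/2} conj (ε x)`. -/
theorem stmt_13 (X : Type*) [CommGroup X] [Fintype X] [DecidableEq X]
    [Fintype (X →* ℂˣ)] [DecidableEq (X →* ℂˣ)]
    (V E : Type*) [Fintype V] [Fintype E] [DecidableEq V] [DecidableEq E]
    (d ℓ : ℕ) [NeZero ℓ] (hl : 1 ≤ ℓ)
    (A : Fin (d + 1) → Matrix X X ℂ)
    (Pch : (X →* ℂˣ) → Fin (d + 1) → ℂ)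
    (hA : ∀ (i : Fin (d + 1)) (x y : X), A i x y = (Fintype.card X : ℂ)⁻¹ *
      ∑ ε : X →* ℂˣ, Pch ε i * conj ((ε x : ℂˣ) : ℂ) * ((ε y : ℂˣ) : ℂ))
    (eh et : E → V) (lam : E → Fin (d + 1))
    (r : Fin ℓ → V) (hr : Function.Injective r)
    (vt : (E → (X →* ℂˣ)) → V → (X →* ℂˣ))
    (hvt : ∀ τ v, vt τ v =
      (∏ e ∈ Finset.univ.filter fun e => eh e = v, τ e)⁻¹ *
        ∏ e ∈ Finset.univ.filter fun e => et e = v, τ e)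
    (Sc : (Fin ℓ → X) → ℂ)
    (hSc : ∀ xv, Sc xv = ∑ σ : V → X,
      (∏ e, A (lam e) (σ (et e)) (σ (eh e))) *
        ∏ i, (if σ (r i) = xv i then (1 : ℂ) else 0)) :
    ∀ xv : Fin ℓ → X,
      Sc xv = (((Fintype.card X : ℝ) ^
          ((Fintype.card V : ℝ) - (Fintype.card E : ℝ) - (ℓ : ℝ) / 2) : ℝ) : ℂ) *
        ∑ τ : E → (X →* ℂˣ),
          (∏ e, Pch (τ e) (lam e)) *
          (∏ v ∈ Finset.univ.filter fun v : V => ¬ ∃ i, r i = v,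
            (if vt τ v = 1 then (1 : ℂ) else 0)) *
          ∏ i, ((Real.sqrt (Fintype.card X) : ℂ)⁻¹ *
            conj ((((vt τ (r i)) (xv i) : ℂˣ)) : ℂ)) := by
  intro xv
  classical
  have hq0 : (Fintype.card X : ℂ) ≠ 0 := Nat.cast_ne_zero.mpr Fintype.card_ne_zero
  set q : ℂ := (Fintype.card X : ℂ) with hq
  set m : ℕ := Fintype.card E with hm
  set n : ℕ := Fintype.card V with hn
  have hℓn : ℓ ≤ n := by simpa using Fintype.card_le_of_injective r hr
  -- fiberwise regrouping
  have hfib : ∀ (τ : E → (X →* ℂˣ)) (σ : V → X),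
      (∏ e, (conj ((τ e (σ (et e)) : ℂˣ) : ℂ) * ((τ e (σ (eh e)) : ℂˣ) : ℂ)))
        = ∏ v, conj (((vt τ v) (σ v) : ℂˣ) : ℂ) := by
    intro τ σ
    have hv : ∀ v, conj (((vt τ v) (σ v) : ℂˣ) : ℂ) =
        (∏ e ∈ Finset.univ.filter fun e => et e = v, conj ((τ e (σ v) : ℂˣ) : ℂ)) *
        (∏ e ∈ Finset.univ.filter fun e => eh e = v, ((τ e (σ v) : ℂˣ) : ℂ)) := by
      intro v
      rw [aux_conj, hvt]
      simp only [MonoidHom.mul_apply, MonoidHom.inv_apply, mul_inv_rev, inv_inv,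
        Units.val_mul, Units.val_inv_eq_inv_val, MonoidHom.finset_prod_apply]
      simp only [← Units.coeHom_apply, map_prod]
      simp only [Units.coeHom_apply]
      congr 1
      · rw [← Finset.prod_inv_distrib]
        refine Finset.prod_congr rfl fun e _ => ?_
        rw [aux_conj, Units.val_inv_eq_inv_val]
    rw [Finset.prod_mul_distrib, Finset.prod_congr rfl (fun v (_ : v ∈ Finset.univ) => hv v),
      Finset.prod_mul_distrib]
    congr 1
    · rw [← Finset.prod_fiberwise Finset.univ et
        (fun e => conj ((τ e (σ (et e)) : ℂˣ) : ℂ))]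
      exact Finset.prod_congr rfl fun v _ => Finset.prod_congr rfl fun e he => by
        rw [(Finset.mem_filter.1 he).2]
    · rw [← Finset.prod_fiberwise Finset.univ eh
        (fun e => ((τ e (σ (eh e)) : ℂˣ) : ℂ))]
      exact Finset.prod_congr rfl fun v _ => Finset.prod_congr rfl fun e he => by
        rw [(Finset.mem_filter.1 he).2]
  -- step 1: expand the adjacency matrices and swap the sums
  have step1 : Sc xv = q⁻¹ ^ m *
      ∑ τ : E → (X →* ℂˣ), (∏ e, Pch (τ e) (lam e)) *
        ∑ σ : V → X, (∏ v, conj (((vt τ v) (σ v) : ℂˣ) : ℂ)) *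
          ∏ i, (if σ (r i) = xv i then (1 : ℂ) else 0) := by
    rw [hSc]
    have hσ : ∀ σ : V → X,
        (∏ e, A (lam e) (σ (et e)) (σ (eh e))) = q⁻¹ ^ m *
          ∑ τ : E → (X →* ℂˣ), ∏ e, (Pch (τ e) (lam e) *
            (conj ((τ e (σ (et e)) : ℂˣ) : ℂ) * ((τ e (σ (eh e)) : ℂˣ) : ℂ))) := by
      intro σ
      simp_rw [hA, mul_assoc (Pch _ _)]
      rw [Finset.prod_mul_distrib, Finset.prod_const, Finset.card_univ, ← hm,
        Fintype.prod_sum]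
    simp_rw [hσ, mul_assoc (q⁻¹ ^ m)]
    rw [← Finset.mul_sum]
    congr 1
    simp_rw [Finset.sum_mul]
    rw [Finset.sum_comm]
    refine Finset.sum_congr rfl fun τ _ => ?_
    have hps : ∀ σ : V → X,
        (∏ e, (Pch (τ e) (lam e) *
          (conj ((τ e (σ (et e)) : ℂˣ) : ℂ) * ((τ e (σ (eh e)) : ℂˣ) : ℂ))))
          = (∏ e, Pch (τ e) (lam e)) * ∏ v, conj (((vt τ v) (σ v) : ℂˣ) : ℂ) := fun σ => by
      rw [Finset.prod_mul_distrib, hfib τ σ]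
    simp_rw [hps, mul_assoc]
    rw [← Finset.mul_sum]
  -- character sum
  have hchar : ∀ χ : X →* ℂˣ, ∑ x : X, conj ((χ x : ℂˣ) : ℂ)
      = if χ = 1 then q else 0 := by
    intro χ
    rw [← map_sum (starRingEnd ℂ), aux_sum]
    split_ifs <;> simp [hq]
  -- counting non-roots
  have himg : (Finset.univ.filter fun v : V => ∃ i, r i = v) = Finset.image r Finset.univ := by
    ext v; simp
  have hk : (Finset.univ.filter fun v : V => ¬∃ i, r i = v).card = n - ℓ := by
    have h1 : (Finset.univ.filter fun v : V => ∃ i, r i = v).card = ℓ := by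
      rw [himg, Finset.card_image_of_injective _ hr, Finset.card_univ, Fintype.card_fin]
    have h2 := Finset.card_filter_add_card_filter_not
      (s := (Finset.univ : Finset V)) (p := fun v => ∃ i, r i = v)
    rw [Finset.card_univ, ← hn, h1] at h2
    omega
  -- inner sum evaluation
  have hinner : ∀ τ : E → (X →* ℂˣ),
      (∑ σ : V → X, (∏ v, conj (((vt τ v) (σ v) : ℂˣ) : ℂ)) *
          ∏ i, (if σ (r i) = xv i then (1 : ℂ) else 0))
        = q ^ (n - ℓ) *
          ((∏ v ∈ Finset.univ.filter fun v : V => ¬ ∃ i, r i = v,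
            (if vt τ v = 1 then (1 : ℂ) else 0)) *
          ∏ i, conj (((vt τ (r i)) (xv i) : ℂˣ) : ℂ)) := by
    intro τ
    rw [aux_factor r hr xv (fun v x => conj (((vt τ v) x : ℂˣ) : ℂ))]
    rw [Finset.prod_congr rfl (fun v _ => hchar (vt τ v))]
    have : ∀ v : V, (if vt τ v = 1 then q else 0)
        = q * (if vt τ v = 1 then (1 : ℂ) else 0) := by
      intro v; split_ifs <;> simp
    rw [Finset.prod_congr rfl (fun v _ => this v), Finset.prod_mul_distrib,
      Finset.prod_const, hk]
    ring
  -- scalar identity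
  have hc : (0 : ℝ) < (Fintype.card X : ℝ) := by exact_mod_cast Fintype.card_pos
  have hreal : (Fintype.card X : ℝ) ^ ((n : ℝ) - (m : ℝ) - (ℓ : ℝ) / 2) *
      ((Real.sqrt (Fintype.card X))⁻¹) ^ ℓ
      = ((Fintype.card X : ℝ)⁻¹) ^ m * (Fintype.card X : ℝ) ^ (n - ℓ) := by
    have e1 : ((Real.sqrt (Fintype.card X))⁻¹) ^ ℓ
        = (Fintype.card X : ℝ) ^ (-((ℓ : ℝ) / 2)) := by
      rw [Real.sqrt_eq_rpow, inv_pow, ← Real.rpow_natCast ((Fintype.card X : ℝ) ^ (1/(2:ℝ))) ℓ,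
        ← Real.rpow_mul hc.le, ← Real.rpow_neg hc.le]
      congr 1; ring
    have e2 : ((Fintype.card X : ℝ)⁻¹) ^ m = (Fintype.card X : ℝ) ^ (-(m : ℝ)) := by
      rw [inv_pow, ← Real.rpow_natCast (Fintype.card X : ℝ) m, ← Real.rpow_neg hc.le]
    have e3 : (Fintype.card X : ℝ) ^ (n - ℓ) = (Fintype.card X : ℝ) ^ ((n : ℝ) - (ℓ : ℝ)) := by
      rw [← Real.rpow_natCast (Fintype.card X : ℝ) (n - ℓ), Nat.cast_sub hℓn]
    rw [e1, e2, e3, ← Real.rpow_add hc, ← Real.rpow_add hc]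
    congr 1; ring
  have hscal : (((Fintype.card X : ℝ) ^
        ((n : ℝ) - (m : ℝ) - (ℓ : ℝ) / 2) : ℝ) : ℂ) *
        ((Real.sqrt (Fintype.card X) : ℂ)⁻¹) ^ ℓ = q⁻¹ ^ m * q ^ (n - ℓ) := by
    have : ((Real.sqrt (Fintype.card X) : ℂ)⁻¹) ^ ℓ
        = ((((Real.sqrt (Fintype.card X))⁻¹) ^ ℓ : ℝ) : ℂ) := by push_cast; ring
    rw [this, ← Complex.ofReal_mul, hreal, hq]
    push_cast; ring
  -- final assembly
  rw [step1, Finset.mul_sum, Finset.mul_sum]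
  refine Finset.sum_congr rfl fun τ _ => ?_
  rw [hinner τ]
  have hprod : (∏ i, ((Real.sqrt (Fintype.card X) : ℂ)⁻¹ *
      conj (((vt τ (r i)) (xv i) : ℂˣ) : ℂ)))
      = ((Real.sqrt (Fintype.card X) : ℂ)⁻¹) ^ ℓ *
        ∏ i, conj (((vt τ (r i)) (xv i) : ℂˣ) : ℂ) := by
    rw [Finset.prod_mul_distrib, Finset.prod_const, Finset.card_univ, Fintype.card_fin]
  rw [hprod]
  linear_combination -((∏ e, Pch (τ e) (lam e)) *
    (∏ v ∈ Finset.univ.filter fun v : V => ¬ ∃ i, r i = v,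
      (if vt τ v = 1 then (1 : ℂ) else 0)) *
    ∏ i, conj (((vt τ (r i)) (xv i) : ℂˣ) : ℂ)) * hscal
end

section
/- The dual of a translation association scheme is a translation association scheme: if (X, R) is a translation scheme on a finite abelian group X, with \(X^* = X_0^* \sqcup \cdots \sqcup X_d^*\) the partition of characters by eigenspaces, then the relations \(R_i^* = \{(\varepsilon,\eta) \in (X^*)^2 : \eta\varepsilon^{-1} \in X_i^*\}\) define a commutative association scheme on \(X^*\) which is translation-invariant; moreover its first eigenmatrix equals the second eigenmatrix Q of (X,R) and its second eigenmatrix equals the first eigenmatrix P of (X,R). -/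
open scoped ComplexConjugate
open Matrix

/-!
Write `n = |X|` and `χ_ζ x = conj (ζ x)` (`charVec ζ`). The hypothesis puts `χ_ζ` in the image of
`E_{jmap ζ}`, so `A_i χ_ζ = P_{jmap ζ, i} χ_ζ` and `E_i χ_ζ = [jmap ζ = i] χ_ζ`; reading off the
coordinate at `1` gives `∑_y A_i(1,y) conj(ζ y) = P_{jmap ζ, i}` and
`∑_y E_i(1,y) conj(ζ y) = [jmap ζ = i]`. So the dual matrices are images of first rows under
`T f = (n⁻¹ ∑_y f y ε(y) conj(η y))_{ε,η}` (`charTransform`): `A*_i = n • T (E_i(1,·))`, and we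
take `E*_i = T (A_i(1,·))` (`dualIdem`), whose entries are `n⁻¹ P_{jmap(η ε⁻¹), i}`.
By orthogonality of the characters of `X*`, `T` turns pointwise products into matrix products and
the constant function `1` into the identity, so the `E*_i` are orthogonal idempotents summing to
`1` because the `A_i` are disjoint `0/1` matrices summing to `J`; linearity of `T` and
`E_i = n⁻¹ ∑_j Q_{ji} A_j` give `A*_i = ∑_j Q_{ji} E*_j`. Closure under transposition comes from
`P_{jmap ζ⁻¹, ·} = conj P_{jmap ζ, ·}`, since nonzero primitive idempotents have distinct rows of `P`.
-/

structure CommAssocScheme (X : Type) [Fintype X] [DecidableEq X] (d : ℕ) where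
  A : Fin (d + 1) → Matrix X X ℂ
  E : Fin (d + 1) → Matrix X X ℂ
  P : Matrix (Fin (d + 1)) (Fin (d + 1)) ℂ
  Q : Matrix (Fin (d + 1)) (Fin (d + 1)) ℂ
  A_01 : ∀ i x y, A i x y = 0 ∨ A i x y = 1
  A_ne : ∀ i, A i ≠ 0
  A_zero : A 0 = 1
  A_sum : (∑ i, A i) = Matrix.of fun _ _ => (1 : ℂ)
  A_transpose : ∀ i, ∃ j, (A i)ᵀ = A j
  A_comm : ∀ i j, A i * A j = A j * A i
  A_closed : ∀ i j, ∃ c : Fin (d + 1) → ℂ, A i * A j = ∑ k, c k • A k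
  E_idem : ∀ i j, E i * E j = if i = j then E i else 0
  E_sum : (∑ i, E i) = 1
  E_zero : E 0 = (Fintype.card X : ℂ)⁻¹ • Matrix.of fun _ _ => (1 : ℂ)
  E_mem : ∀ i, ∃ c : Fin (d + 1) → ℂ, E i = ∑ k, c k • A k
  P_def : ∀ i, A i = ∑ j, P j i • E j
  Q_def : ∀ i, E i = (Fintype.card X : ℂ)⁻¹ • ∑ j, Q j i • A j

section Characters

lemma conj_coe_apply {G : Type*} [Group G] [Fintype G] (ε : G →* ℂˣ) (x : G) :
    conj (ε x : ℂ) = ((ε⁻¹ x : ℂˣ) : ℂ) := by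
  have h : ‖(ε x : ℂ)‖ = 1 := Complex.norm_eq_one_of_pow_eq_one
    (by rw [← Units.val_pow_eq_pow_val, ← map_pow, pow_card_eq_one, map_one, Units.val_one])
    Fintype.card_ne_zero
  rw [← Complex.inv_eq_conj h, MonoidHom.inv_apply, Units.val_inv_eq_inv_val]

lemma sum_coe_apply {G : Type*} [Group G] [Fintype G] (ε : G →* ℂˣ) [Decidable (ε = 1)] :
    ∑ x, (ε x : ℂ) = if ε = 1 then (Fintype.card G : ℂ) else 0 := by
  have hε : (Units.coeHom ℂ).comp ε = 1 ↔ ε = 1 := by simp [MonoidHom.ext_iff]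
  classical
  rw [show ∑ x, (ε x : ℂ) = ∑ x, (Units.coeHom ℂ).comp ε x from rfl, sum_hom_units]
  simp only [hε, Nat.cast_ite, Nat.cast_zero]

variable {G : Type*} [CommGroup G]

def charVec (ζ : G →* ℂˣ) : G → ℂ := fun x => conj (ζ x : ℂ)

@[simp] lemma charVec_one (ζ : G →* ℂˣ) : charVec ζ 1 = 1 := by simp [charVec]

variable [Fintype G]

lemma card_monoidHom_units_complex [Fintype (G →* ℂˣ)] :
    Fintype.card (G →* ℂˣ) = Fintype.card G := by
  simpa only [Nat.card_eq_fintype_card] using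
    CommGroup.card_monoidHom_of_hasEnoughRootsOfUnity G ℂ

lemma sum_coe_apply_eval [Fintype (G →* ℂˣ)] [DecidableEq G] (x : G) :
    ∑ ρ : G →* ℂˣ, (ρ x : ℂ) = if x = 1 then (Fintype.card G : ℂ) else 0 := by
  have hx : (Units.coeHom ℂ).comp (MonoidHom.eval x) = 1 ↔ x = 1 := by
    simpa [MonoidHom.ext_iff] using
      CommGroup.forall_apply_eq_apply_iff (M := ℂ) (g := x) (g' := 1)
  classical
  rw [show ∑ ρ : G →* ℂˣ, (ρ x : ℂ) = ∑ ρ, (Units.coeHom ℂ).comp (MonoidHom.eval x) ρ from rfl,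
    sum_hom_units, card_monoidHom_units_complex]
  simp only [hx, Nat.cast_ite, Nat.cast_zero]

lemma conj_coe_apply_mul_coe_apply (ρ : G →* ℂˣ) (x y : G) :
    conj (ρ x : ℂ) * ρ y = (ρ (x⁻¹ * y) : ℂ) := by
  simp [conj_coe_apply]

lemma conj_coe_apply_mul_inv (ε η : G →* ℂˣ) (x : G) :
    conj ((η * ε⁻¹) x : ℂ) = ε x * conj (η x : ℂ) := by
  simp [conj_coe_apply, mul_comm]

noncomputable def charTransform : (G → ℂ) →ₗ[ℂ] Matrix (G →* ℂˣ) (G →* ℂˣ) ℂ where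
  toFun f := Matrix.of fun ε η => (Fintype.card G : ℂ)⁻¹ * ∑ x, f x * ε x * conj (η x : ℂ)
  map_add' f g := by ext; simp [add_mul, Finset.sum_add_distrib, mul_add]
  map_smul' c f := by ext; simp [Finset.mul_sum, mul_assoc, mul_left_comm]

lemma charTransform_apply (f : G → ℂ) (ε η : G →* ℂˣ) :
    charTransform f ε η = (Fintype.card G : ℂ)⁻¹ * ∑ x, f x * ε x * conj (η x : ℂ) := rfl

lemma charTransform_row_apply (M : Matrix G G ℂ) (ε η : G →* ℂˣ) :
    charTransform (M 1) ε η = (Fintype.card G : ℂ)⁻¹ * (M *ᵥ charVec (η * ε⁻¹)) 1 := by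
  simp only [charTransform_apply, mulVec, dotProduct, charVec, conj_coe_apply_mul_inv, mul_assoc]

lemma charTransform_mul [Fintype (G →* ℂˣ)] (f g : G → ℂ) :
    charTransform f * charTransform g = charTransform (f * g) := by
  classical
  ext ε η
  calc ∑ ρ, charTransform f ε ρ * charTransform g ρ η
      = ∑ ρ : G →* ℂˣ, ∑ x, ∑ y, (Fintype.card G : ℂ)⁻¹ * (Fintype.card G : ℂ)⁻¹ *
          (f x * ε x * (g y * conj (η y : ℂ)) * (conj (ρ x : ℂ) * ρ y)) := by
        refine Finset.sum_congr rfl fun ρ _ => ?_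
        rw [charTransform_apply, charTransform_apply, mul_mul_mul_comm, Finset.sum_mul_sum,
          Finset.mul_sum]
        refine Finset.sum_congr rfl fun x _ => ?_
        rw [Finset.mul_sum]
        refine Finset.sum_congr rfl fun y _ => ?_
        ring
    _ = (Fintype.card G : ℂ)⁻¹ * (Fintype.card G : ℂ)⁻¹ * ∑ x, ∑ y,
          f x * ε x * (g y * conj (η y : ℂ)) * ∑ ρ : G →* ℂˣ, (ρ (x⁻¹ * y) : ℂ) := by
        simp only [Finset.mul_sum, ← conj_coe_apply_mul_coe_apply]
        rw [Finset.sum_comm]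
        exact Finset.sum_congr rfl fun x _ => Finset.sum_comm
    _ = (Fintype.card G : ℂ)⁻¹ * ∑ x, f x * g x * ε x * conj (η x : ℂ) := by
        simp only [sum_coe_apply_eval, inv_mul_eq_one, mul_ite, mul_zero, Finset.sum_ite_eq,
          Finset.mem_univ, if_true, Finset.mul_sum]
        refine Finset.sum_congr rfl fun x _ => ?_
        field_simp

lemma charTransform_one [Fintype (G →* ℂˣ)] [DecidableEq (G →* ℂˣ)] :
    charTransform (1 : G → ℂ) = 1 := by
  ext ε η
  have hsum : ∑ x, (ε x : ℂ) * conj (η x : ℂ) = ∑ x, ((ε * η⁻¹) x : ℂ) := by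
    simp [conj_coe_apply]
  rw [charTransform_apply]
  simp only [Pi.one_apply, one_mul, hsum, sum_coe_apply, one_apply]
  by_cases h : ε = η
  · simp [h, mul_inv_cancel η]
  · simp [h, mul_inv_eq_one.not.mpr h]

end Characters

lemma sum_smul_mul_sum_smul {ι R A : Type*} [Fintype ι] [DecidableEq ι] [CommSemiring R]
    [Semiring A] [Algebra R A] {e : ι → A} (he : ∀ i j, e i * e j = if i = j then e i else 0)
    (a b : ι → R) : (∑ i, a i • e i) * (∑ i, b i • e i) = ∑ i, (a i * b i) • e i := by
  simp_rw [Finset.sum_mul, Finset.mul_sum, smul_mul_smul_comm, he, smul_ite, smul_zero,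
    Finset.sum_ite_eq, Finset.mem_univ, if_true]

lemma exists_forall_apply_inv_eq_iff {G ι : Type*} [InvolutiveInv G] {f : G → ι}
    (hf : ∀ a b, f a = f b → f a⁻¹ = f b⁻¹) (i : ι) : ∃ i', ∀ a, f a⁻¹ = i ↔ f a = i' := by
  by_cases h : ∃ b, f b⁻¹ = i
  · obtain ⟨b, rfl⟩ := h
    refine ⟨f b, fun a => ⟨fun hab => ?_, hf a b⟩⟩
    simpa using hf _ _ hab
  · refine ⟨i, fun a => ⟨fun ha => absurd ⟨a, ha⟩ h, fun ha => absurd ⟨a⁻¹, by rwa [inv_inv]⟩ h⟩⟩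

namespace CommAssocScheme

variable {X : Type} [Fintype X] [DecidableEq X] {d : ℕ} (S : CommAssocScheme X d)

open scoped ComplexOrder in
lemma A_apply_mul_A_apply (i j : Fin (d + 1)) (x y : X) :
    S.A i x y * S.A j x y = if i = j then S.A i x y else 0 := by
  have hsum : ∑ k, S.A k x y = 1 := by
    simpa [Matrix.sum_apply] using congrFun (congrFun S.A_sum x) y
  split_ifs with hij
  · subst hij
    rcases S.A_01 i x y with h | h <;> simp [h]
  rcases S.A_01 i x y with h | h
  · simp [h]
  rcases S.A_01 j x y with h' | h'
  · simp [h']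
  have hle : ∑ k ∈ {i, j}, S.A k x y ≤ ∑ k, S.A k x y :=
    Finset.sum_le_sum_of_subset_of_nonneg (Finset.subset_univ _)
      fun k _ _ => by rcases S.A_01 k x y with hk | hk <;> simp [hk]
  rw [Finset.sum_pair hij, h, h', hsum] at hle
  norm_num at hle

lemma E_mul_A (j k : Fin (d + 1)) : S.E j * S.A k = S.P j k • S.E j := by
  simp [S.P_def k, Finset.mul_sum, S.E_idem]

lemma E_mul_E_eq_smul (j i : Fin (d + 1)) :
    S.E j * S.E i = ((Fintype.card X : ℂ)⁻¹ * ∑ k, S.Q k i * S.P j k) • S.E j := by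
  rw [S.Q_def i, mul_smul_comm, Finset.mul_sum]
  simp only [mul_smul_comm, E_mul_A, smul_smul, ← Finset.sum_smul, mul_comm]

lemma inv_card_mul_sum_Q_mul_P {j : Fin (d + 1)} (hj : S.E j ≠ 0) (i : Fin (d + 1)) :
    (Fintype.card X : ℂ)⁻¹ * ∑ k, S.Q k i * S.P j k = if j = i then 1 else 0 :=
  smul_left_injective ℂ hj <| by
    simp only [← E_mul_E_eq_smul, S.E_idem, ite_smul, one_smul, zero_smul]

lemma eq_of_P_row_eq {j j' : Fin (d + 1)} (hj : S.E j ≠ 0) (hj' : S.E j' ≠ 0)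
    (h : ∀ k, S.P j k = S.P j' k) : j = j' := by
  have := S.inv_card_mul_sum_Q_mul_P hj j'
  simp only [h, S.inv_card_mul_sum_Q_mul_P hj', if_true] at this
  by_contra hne
  simp [hne] at this

lemma E_mulVec_of_E_mulVec_eq {j : Fin (d + 1)} {v : X → ℂ} (hv : S.E j *ᵥ v = v)
    (i : Fin (d + 1)) : S.E i *ᵥ v = if j = i then v else 0 := by
  rw [← hv, mulVec_mulVec, S.E_idem]
  by_cases h : j = i <;> simp [h, eq_comm]

lemma A_mulVec_of_E_mulVec_eq {j : Fin (d + 1)} {v : X → ℂ} (hv : S.E j *ᵥ v = v)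
    (i : Fin (d + 1)) : S.A i *ᵥ v = S.P j i • v := by
  simp [S.P_def i, Matrix.sum_mulVec, Matrix.smul_mulVec, S.E_mulVec_of_E_mulVec_eq hv]

end CommAssocScheme

section Dual

variable {X : Type} [CommGroup X] {d : ℕ}

def dualAdj (jmap : (X →* ℂˣ) → Fin (d + 1)) (i : Fin (d + 1)) :
    Matrix (X →* ℂˣ) (X →* ℂˣ) ℂ :=
  Matrix.of fun ε η => if jmap (η * ε⁻¹) = i then 1 else 0

lemma sum_dualAdj (jmap : (X →* ℂˣ) → Fin (d + 1)) :
    ∑ i, dualAdj jmap i = Matrix.of fun _ _ => (1 : ℂ) := by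
  ext ε η
  simp [dualAdj, Matrix.sum_apply]

lemma dualAdj_mul_right (jmap : (X →* ℂˣ) → Fin (d + 1)) (i : Fin (d + 1)) (ζ ε η : X →* ℂˣ) :
    dualAdj jmap i (ε * ζ) (η * ζ) = dualAdj jmap i ε η := by
  rw [dualAdj, of_apply, of_apply,
    show η * ζ * (ε * ζ)⁻¹ = η * ε⁻¹ from mul_div_mul_right_eq_div η ε ζ]

variable [Fintype X] [DecidableEq X]

noncomputable def dualIdem (S : CommAssocScheme X d) (i : Fin (d + 1)) :
    Matrix (X →* ℂˣ) (X →* ℂˣ) ℂ :=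
  charTransform (S.A i 1)

lemma dualIdem_mul_dualIdem [Fintype (X →* ℂˣ)] (S : CommAssocScheme X d) (i j : Fin (d + 1)) :
    dualIdem S i * dualIdem S j = if i = j then dualIdem S i else 0 := by
  have hrow : S.A i 1 * S.A j 1 = if i = j then S.A i 1 else 0 := by
    ext y
    rw [Pi.mul_apply, S.A_apply_mul_A_apply]
    split_ifs <;> rfl
  rw [dualIdem, dualIdem, charTransform_mul, hrow]
  split_ifs <;> simp

lemma sum_dualIdem [Fintype (X →* ℂˣ)] [DecidableEq (X →* ℂˣ)] (S : CommAssocScheme X d) :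
    ∑ i, dualIdem S i = 1 := by
  have hrow : ∑ i, S.A i 1 = 1 := by
    ext y
    simpa [Matrix.sum_apply] using congrFun (congrFun S.A_sum 1) y
  simp only [dualIdem, ← map_sum, hrow, charTransform_one]

lemma dualIdem_zero [Fintype (X →* ℂˣ)] (S : CommAssocScheme X d) :
    dualIdem S 0 = (Fintype.card (X →* ℂˣ) : ℂ)⁻¹ • Matrix.of fun _ _ => (1 : ℂ) := by
  ext ε η
  simp [dualIdem, charTransform_apply, S.A_zero, one_apply, card_monoidHom_units_complex]

/-- `jmap` encodes the partition `X* = X₀* ⊔ ⋯ ⊔ X_d*`: `ζ ∈ X_j*` iff `j = jmap ζ`. -/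
def CommAssocScheme.IsEigenIndex (S : CommAssocScheme X d) (jmap : (X →* ℂˣ) → Fin (d + 1)) :
    Prop :=
  ∀ ζ, S.E (jmap ζ) *ᵥ charVec ζ = charVec ζ

variable {S : CommAssocScheme X d} {jmap : (X →* ℂˣ) → Fin (d + 1)}

lemma charTransform_E_row (hE : S.IsEigenIndex jmap) (i : Fin (d + 1)) :
    charTransform (S.E i 1) = (Fintype.card X : ℂ)⁻¹ • dualAdj jmap i := by
  ext ε η
  rw [charTransform_row_apply, S.E_mulVec_of_E_mulVec_eq (hE _)]
  split_ifs with h <;> simp [dualAdj, h]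

lemma dualIdem_apply (hE : S.IsEigenIndex jmap) (i : Fin (d + 1))
    (ε η : X →* ℂˣ) : dualIdem S i ε η = (Fintype.card X : ℂ)⁻¹ * S.P (jmap (η * ε⁻¹)) i := by
  rw [dualIdem, charTransform_row_apply, S.A_mulVec_of_E_mulVec_eq (hE _)]
  simp

lemma dualIdem_eq_sum_P [Fintype (X →* ℂˣ)] (hE : S.IsEigenIndex jmap)
    (i : Fin (d + 1)) :
    dualIdem S i = (Fintype.card (X →* ℂˣ) : ℂ)⁻¹ • ∑ j, S.P j i • dualAdj jmap j := by
  ext ε η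
  simp [dualIdem_apply hE, Matrix.sum_apply, dualAdj, card_monoidHom_units_complex]

lemma dualAdj_eq_sum_Q (hE : S.IsEigenIndex jmap) (i : Fin (d + 1)) :
    dualAdj jmap i = ∑ j, S.Q j i • dualIdem S j := by
  have hrow : S.E i 1 = (Fintype.card X : ℂ)⁻¹ • ∑ j, S.Q j i • S.A j 1 := by
    ext y
    simpa [Matrix.sum_apply, Finset.mul_sum] using congrFun (congrFun (S.Q_def i) 1) y
  have hn : (Fintype.card X : ℂ)⁻¹ ≠ 0 := by simp [Fintype.card_ne_zero]
  apply smul_right_injective _ hn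
  simp only [← charTransform_E_row hE, hrow, map_smul, map_sum, dualIdem, Finset.smul_sum]

lemma dualAdj_zero [Fintype (X →* ℂˣ)] [DecidableEq (X →* ℂˣ)]
    (hE : S.IsEigenIndex jmap) : dualAdj jmap 0 = 1 := by
  have hrow : S.E 0 1 = (Fintype.card X : ℂ)⁻¹ • 1 := by
    ext y
    simp [S.E_zero]
  have hn : (Fintype.card X : ℂ)⁻¹ ≠ 0 := by simp [Fintype.card_ne_zero]
  apply smul_right_injective _ hn
  simp only [← charTransform_E_row hE, hrow, map_smul, charTransform_one]

lemma E_jmap_ne_zero (hE : S.IsEigenIndex jmap) (ζ : X →* ℂˣ) :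
    S.E (jmap ζ) ≠ 0 := by
  intro h
  simpa [h] using congrFun (hE ζ) 1

lemma P_jmap_eq_sum (hE : S.IsEigenIndex jmap) (ζ : X →* ℂˣ)
    (k : Fin (d + 1)) : S.P (jmap ζ) k = ∑ y, S.A k 1 y * conj (ζ y : ℂ) := by
  simpa [mulVec, dotProduct, charVec] using (congrFun (S.A_mulVec_of_E_mulVec_eq (hE ζ) k) 1).symm

lemma P_jmap_inv (hE : S.IsEigenIndex jmap) (ζ : X →* ℂˣ)
    (k : Fin (d + 1)) : S.P (jmap ζ⁻¹) k = conj (S.P (jmap ζ) k) := by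
  simp only [P_jmap_eq_sum hE, map_sum, map_mul, ← conj_coe_apply, Complex.conj_conj]
  refine Finset.sum_congr rfl fun y _ => ?_
  rcases S.A_01 k 1 y with h | h <;> simp [h]

lemma jmap_inv_eq_of_eq (hE : S.IsEigenIndex jmap) {ζ ξ : X →* ℂˣ}
    (h : jmap ζ = jmap ξ) : jmap ζ⁻¹ = jmap ξ⁻¹ :=
  S.eq_of_P_row_eq (E_jmap_ne_zero hE _) (E_jmap_ne_zero hE _) fun k => by
    rw [P_jmap_inv hE, P_jmap_inv hE, h]

lemma exists_transpose_dualAdj_eq (hE : S.IsEigenIndex jmap)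
    (i : Fin (d + 1)) : ∃ j, (dualAdj jmap i)ᵀ = dualAdj jmap j := by
  obtain ⟨j, hj⟩ := exists_forall_apply_inv_eq_iff (f := jmap) (fun _ _ => jmap_inv_eq_of_eq hE) i
  refine ⟨j, Matrix.ext fun ε η => ?_⟩
  rw [transpose_apply, dualAdj, dualAdj, of_apply, of_apply,
    show ε * η⁻¹ = (η * ε⁻¹)⁻¹ from (inv_div η ε).symm]
  exact if_congr (hj _) rfl rfl

lemma dualAdj_mul_dualAdj [Fintype (X →* ℂˣ)] [DecidableEq (X →* ℂˣ)]
    (hE : S.IsEigenIndex jmap) (i j : Fin (d + 1)) :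
    dualAdj jmap i * dualAdj jmap j = ∑ k, (S.Q k i * S.Q k j) • dualIdem S k := by
  rw [dualAdj_eq_sum_Q hE, dualAdj_eq_sum_Q hE]
  exact sum_smul_mul_sum_smul (dualIdem_mul_dualIdem S) _ _

lemma exists_dualAdj_mul_dualAdj_eq [Fintype (X →* ℂˣ)] [DecidableEq (X →* ℂˣ)]
    (hE : S.IsEigenIndex jmap) (i j : Fin (d + 1)) :
    ∃ c : Fin (d + 1) → ℂ, dualAdj jmap i * dualAdj jmap j = ∑ k, c k • dualAdj jmap k := by
  have hmem : dualAdj jmap i * dualAdj jmap j ∈ Submodule.span ℂ (Set.range (dualAdj jmap)) := by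
    rw [dualAdj_mul_dualAdj hE]
    refine Submodule.sum_mem _ fun k _ => Submodule.smul_mem _ _ ?_
    rw [dualIdem_eq_sum_P hE]
    exact Submodule.smul_mem _ _ <| Submodule.sum_mem _ fun m _ =>
      Submodule.smul_mem _ _ (Submodule.subset_span ⟨m, rfl⟩)
  obtain ⟨c, hc⟩ := (Submodule.mem_span_range_iff_exists_fun ℂ).1 hmem
  exact ⟨c, hc.symm⟩

end Dual

theorem stmt_14_general {X : Type} [Fintype X] [DecidableEq X] [CommGroup X]
    [Fintype (X →* ℂˣ)] [DecidableEq (X →* ℂˣ)] {d : ℕ}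
    (S : CommAssocScheme X d)
    (jmap : (X →* ℂˣ) → Fin (d + 1))
    (hj : ∀ ε : X →* ℂˣ,
      (S.E (jmap ε)).mulVec
          (fun x => (Real.sqrt (Fintype.card X) : ℂ)⁻¹ * conj ((ε x : ℂˣ) : ℂ)) =
        fun x => (Real.sqrt (Fintype.card X) : ℂ)⁻¹ * conj ((ε x : ℂˣ) : ℂ))
    (Astar : Fin (d + 1) → Matrix (X →* ℂˣ) (X →* ℂˣ) ℂ)
    (hAstar : ∀ (i : Fin (d + 1)) (ε η : X →* ℂˣ),
      Astar i ε η = if jmap (η * ε⁻¹) = i then 1 else 0) :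
    (∀ i ε η, Astar i ε η = 0 ∨ Astar i ε η = 1) ∧
    (Astar 0 = 1) ∧
    ((∑ i, Astar i) = Matrix.of fun _ _ => (1 : ℂ)) ∧
    (∀ i, ∃ j, (Astar i)ᵀ = Astar j) ∧
    (∀ i j, Astar i * Astar j = Astar j * Astar i) ∧
    (∀ i j, ∃ c : Fin (d + 1) → ℂ, Astar i * Astar j = ∑ k, c k • Astar k) ∧
    (∀ (i : Fin (d + 1)) (ζ ε η : X →* ℂˣ), Astar i (ε * ζ) (η * ζ) = Astar i ε η) ∧
    (∃ Estar : Fin (d + 1) → Matrix (X →* ℂˣ) (X →* ℂˣ) ℂ,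
      (∀ i j, Estar i * Estar j = if i = j then Estar i else 0) ∧
      ((∑ i, Estar i) = 1) ∧
      (Estar 0 = (Fintype.card (X →* ℂˣ) : ℂ)⁻¹ • Matrix.of fun _ _ => (1 : ℂ)) ∧
      (∀ i, Astar i = ∑ j, S.Q j i • Estar j) ∧
      (∀ i, Estar i = (Fintype.card (X →* ℂˣ) : ℂ)⁻¹ • ∑ j, S.P j i • Astar j)) := by
  obtain rfl : Astar = dualAdj jmap := funext fun i => Matrix.ext (hAstar i)
  have hE : S.IsEigenIndex jmap := fun ζ => by
    have hs : ((Real.sqrt (Fintype.card X) : ℝ) : ℂ)⁻¹ ≠ 0 := by simp [Fintype.card_ne_zero]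
    refine smul_right_injective _ hs ?_
    simp only [← mulVec_smul]
    exact hj ζ
  refine ⟨fun i ε η => ?_, dualAdj_zero hE, sum_dualAdj jmap, exists_transpose_dualAdj_eq hE,
    fun i j => ?_, exists_dualAdj_mul_dualAdj_eq hE, dualAdj_mul_right jmap,
    dualIdem S, dualIdem_mul_dualIdem S, sum_dualIdem S, dualIdem_zero S, dualAdj_eq_sum_Q hE,
    dualIdem_eq_sum_P hE⟩
  · by_cases h : jmap (η * ε⁻¹) = i <;> simp [dualAdj, h]
  · simp only [dualAdj_mul_dualAdj hE, mul_comm]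

/-- The dual of a translation association scheme is a translation
association scheme. Let `(X, R)` be a translation scheme on a finite abelian group `X`
(so the relations are translation-invariant and each character vector `ε̂` lies in an
eigenspace `E (jmap ε) ℂ^X`), and define dual adjacency matrices on `X^* = X →* ℂˣ` by
`(Astar i) ε η = 1` iff `jmap (η ε⁻¹) = i`, i.e. by the relations
`R*_i = {(ε, η) : η ε⁻¹ ∈ X_i^*}`. Then the `Astar i` form a commutative association
scheme on `X^*` which is translation-invariant, and its first eigenmatrix equals `Q`
while its second eigenmatrix equals `P`. -/
theorem stmt_14 {X : Type} [Fintype X] [DecidableEq X] [CommGroup X]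
    [Fintype (X →* ℂˣ)] [DecidableEq (X →* ℂˣ)] {d : ℕ}
    (S : CommAssocScheme X d)
    (htrans : ∀ (i : Fin (d + 1)) (z x y : X), S.A i (x * z) (y * z) = S.A i x y)
    (jmap : (X →* ℂˣ) → Fin (d + 1))
    (hj : ∀ ε : X →* ℂˣ,
      (S.E (jmap ε)).mulVec
          (fun x => (Real.sqrt (Fintype.card X) : ℂ)⁻¹ * conj ((ε x : ℂˣ) : ℂ)) =
        fun x => (Real.sqrt (Fintype.card X) : ℂ)⁻¹ * conj ((ε x : ℂˣ) : ℂ))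
    (Astar : Fin (d + 1) → Matrix (X →* ℂˣ) (X →* ℂˣ) ℂ)
    (hAstar : ∀ (i : Fin (d + 1)) (ε η : X →* ℂˣ),
      Astar i ε η = if jmap (η * ε⁻¹) = i then 1 else 0) :
    (∀ i ε η, Astar i ε η = 0 ∨ Astar i ε η = 1) ∧
    (Astar 0 = 1) ∧
    ((∑ i, Astar i) = Matrix.of fun _ _ => (1 : ℂ)) ∧
    (∀ i, ∃ j, (Astar i)ᵀ = Astar j) ∧
    (∀ i j, Astar i * Astar j = Astar j * Astar i) ∧
    (∀ i j, ∃ c : Fin (d + 1) → ℂ, Astar i * Astar j = ∑ k, c k • Astar k) ∧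
    (∀ (i : Fin (d + 1)) (ζ ε η : X →* ℂˣ), Astar i (ε * ζ) (η * ζ) = Astar i ε η) ∧
    (∃ Estar : Fin (d + 1) → Matrix (X →* ℂˣ) (X →* ℂˣ) ℂ,
      (∀ i j, Estar i * Estar j = if i = j then Estar i else 0) ∧
      ((∑ i, Estar i) = 1) ∧
      (Estar 0 = (Fintype.card (X →* ℂˣ) : ℂ)⁻¹ • Matrix.of fun _ _ => (1 : ℂ)) ∧
      (∀ i, Astar i = ∑ j, S.Q j i • Estar j) ∧
      (∀ i, Estar i = (Fintype.card (X →* ℂˣ) : ℂ)⁻¹ • ∑ j, S.P j i • Astar j)) :=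
  stmt_14_general S jmap hj Astar hAstar
end

section
/- Order-zero duality (generalizing Jaeger): let (X,R) be a translation association scheme on a finite abelian group X, and let \(\mathsf{S}\) be an order-0 scaffold (a scalar) on a weakly connected plane digraph G with n nodes and edge weights among \(A_0,\dots,A_d\). Then \(\mathsf{S} = |X|^{\,n-1}\,\mathsf{S}^\dagger\), where \(\mathsf{S}^\dagger\) is the order-0 scaffold on the planar dual digraph \(G^\dagger\) (dual edges rotated 90° clockwise) over the dual translation scheme \((X^*, R^*)\), with each weight \(A_i\) replaced by the dual primitive idempotent \(E_i^*\). -/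
open scoped ComplexConjugate
open Finset

/-!
Expanding each `A i` in characters turns the scaffold into a sum over edge labellings
`ε : E → X^*`; the sum over node states `σ : V → X` then only sees the boundary `∂ε : V → X^*`,
and by orthogonality of characters it keeps exactly the circulations `∂ε = 1`, each with weight
`|X|^|V|`. Dually, `E*_i(ε, η)` depends only on `η ε⁻¹`, so the dual scaffold is a sum over the
coboundaries `δμ` of face labellings, each attained `|ker δ| = |X|` times because the dual is
connected. Planarity enters only through `range δ = ker ∂`: the inclusion is the circulation
property, and equality follows by counting, as `|ker ∂| = |X|^(|E|-|V|+1)` (the primal graph is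
connected) and `|range δ| = |X|^(|F|-1)` agree by Euler's formula.
-/

namespace MonoidHom

variable {G H : Type*} [Group G] [Group H]

theorem card_ker_mul_card_range (φ : G →* H) :
    Nat.card φ.ker * Nat.card φ.range = Nat.card G := by
  rw [← Subgroup.index_ker, Subgroup.card_mul_index]

theorem sum_comp_eq_card_ker_smul {M : Type*} [Fintype G] [Fintype H] [DecidableEq H]
    [AddCommMonoid M] (φ : G →* H) (f : H → M) :
    ∑ g, f (φ g) = Nat.card φ.ker • ∑ h ∈ univ.filter (· ∈ φ.range), f h := by
  rw [← sum_fiberwise univ φ (fun g => f (φ g)), smul_sum, sum_filter]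
  refine sum_congr rfl fun h _ => ?_
  split_ifs with hh
  · rw [sum_congr rfl fun g hg => by rw [(mem_filter.mp hg).2], sum_const,
      card_fiber_eq_of_mem_range φ hh ⟨1, map_one φ⟩, ← Fintype.card_subtype,
      ← Nat.card_eq_fintype_card]
    rfl
  · exact sum_eq_zero fun g hg => absurd ⟨g, (mem_filter.mp hg).2⟩ hh

end MonoidHom

namespace OrderZeroDuality

def piProd (V C : Type*) [Fintype V] [CommGroup C] : (V → C) →* C :=
  ∏ v : V, Pi.evalMonoidHom (fun _ => C) v

theorem piProd_apply {V C : Type*} [Fintype V] [CommGroup C] (f : V → C) :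
    piProd V C f = ∏ v, f v := by
  simp [piProd, MonoidHom.finsetProd_apply]

theorem card_ker_piProd_mul {V C : Type*} [Fintype V] [DecidableEq V] [Nonempty V]
    [CommGroup C] [Finite C] :
    Nat.card (piProd V C).ker * Nat.card C = Nat.card C ^ Fintype.card V := by
  obtain ⟨v₀⟩ := ‹Nonempty V›
  have hsurj : (piProd V C).range = ⊤ := MonoidHom.range_eq_top.mpr fun c =>
    ⟨Pi.mulSingle v₀ c, by simp [piProd_apply, Pi.mulSingle_apply]⟩
  have := (piProd V C).card_ker_mul_card_range
  rwa [hsurj, Subgroup.card_top, Nat.card_fun, Nat.card_eq_fintype_card (α := V)] at this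

section Cochains

variable {C V E F : Type*} [CommGroup C]

def EdgeAdj (src tgt : E → V) (u w : V) : Prop :=
  ∃ e, (src e = u ∧ tgt e = w) ∨ (src e = w ∧ tgt e = u)

theorem nonempty_of_euler [Fintype V] [Fintype E] [Fintype F] {src tgt : E → F} (f : E → V)
    (hconn : ∀ a b : F, Relation.ReflTransGen (EdgeAdj src tgt) a b)
    (hEuler : (Fintype.card V : ℤ) - Fintype.card E + Fintype.card F = 2) : Nonempty V := by
  by_contra hV
  rw [not_nonempty_iff] at hV
  have : IsEmpty E := f.isEmpty
  have hF : Fintype.card F ≤ 1 := Fintype.card_le_one_iff.mpr fun a b =>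
    ((Relation.reflTransGen_iff_eq fun _ ⟨e, _⟩ => isEmptyElim e).mp (hconn a b)).symm
  simp only [Fintype.card_eq_zero, CharP.cast_eq_zero] at hEuler
  omega

def coboundary (src tgt : E → F) : (F → C) →* (E → C) where
  toFun μ e := μ (tgt e) * (μ (src e))⁻¹
  map_one' := by funext e; simp
  map_mul' μ μ' := by
    funext e
    simp only [Pi.mul_apply, mul_inv]
    exact mul_mul_mul_comm ..

theorem ker_coboundary [Nonempty F] {src tgt : E → F}
    (hconn : ∀ a b : F, Relation.ReflTransGen (EdgeAdj src tgt) a b) :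
    (coboundary (C := C) src tgt).ker = (Pi.constMonoidHom F C).range := by
  apply le_antisymm
  · intro μ hμ
    have hedge : ∀ e, μ (src e) = μ (tgt e) := fun e =>
      (mul_inv_eq_one.mp (congrFun hμ e)).symm
    obtain ⟨a⟩ := ‹Nonempty F›
    have hconst : ∀ b, μ a = μ b := fun b => by
      induction hconn a b with
      | refl => rfl
      | tail _ hbc ih =>
        obtain ⟨e, ⟨hs, ht⟩ | ⟨hs, ht⟩⟩ := hbc
        · rw [ih, ← hs, hedge, ht]
        · rw [ih, ← ht, ← hedge, hs]
    exact ⟨μ a, funext hconst⟩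
  · rintro _ ⟨c, rfl⟩
    funext e
    simp [coboundary]

theorem card_ker_coboundary [Nonempty F] {src tgt : E → F}
    (hconn : ∀ a b : F, Relation.ReflTransGen (EdgeAdj src tgt) a b) :
    Nat.card (coboundary (C := C) src tgt).ker = Nat.card C := by
  rw [ker_coboundary hconn]
  exact Nat.card_congr (MonoidHom.ofInjective (Function.const_injective (β := C))).toEquiv.symm

variable [Fintype E] [DecidableEq V]

def boundary (src tgt : E → V) : (E → C) →* (V → C) where
  toFun ε v := (∏ e ∈ univ.filter (tgt · = v), ε e) * (∏ e ∈ univ.filter (src · = v), ε e)⁻¹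
  map_one' := by funext v; simp
  map_mul' ε ε' := by
    funext v
    simp only [Pi.mul_apply, prod_mul_distrib, mul_inv]
    exact mul_mul_mul_comm ..

theorem boundary_mulSingle [DecidableEq E] (src tgt : E → V) (e : E) (c : C) :
    boundary src tgt (Pi.mulSingle e c) = Pi.mulSingle (tgt e) c / Pi.mulSingle (src e) c := by
  funext v
  simp [boundary, Pi.mulSingle_apply, eq_comm, div_eq_mul_inv]

theorem mulSingle_div_mem_range_boundary {src tgt : E → V} {u w : V}
    (h : Relation.ReflTransGen (EdgeAdj src tgt) u w) (c : C) :
    (Pi.mulSingle w c / Pi.mulSingle u c : V → C) ∈ (boundary src tgt).range := by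
  classical
  induction h with
  | refl => simp
  | @tail b w _ hbw ih =>
    rw [← div_mul_div_cancel _ (Pi.mulSingle b c)]
    refine mul_mem ?_ ih
    obtain ⟨e, ⟨hs, ht⟩ | ⟨hs, ht⟩⟩ := hbw
    · exact ⟨Pi.mulSingle e c, by rw [boundary_mulSingle, hs, ht]⟩
    · exact ⟨(Pi.mulSingle e c)⁻¹, by rw [map_inv, boundary_mulSingle, hs, ht, inv_div]⟩

theorem range_boundary [Fintype V] [Nonempty V] {src tgt : E → V}
    (hconn : ∀ a b : V, Relation.ReflTransGen (EdgeAdj src tgt) a b) :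
    (boundary src tgt).range = (piProd V C).ker := by
  apply le_antisymm
  · rintro _ ⟨ε, rfl⟩
    simp only [MonoidHom.mem_ker, piProd_apply, boundary, MonoidHom.coe_mk, OneHom.coe_mk,
      prod_mul_distrib, prod_inv_distrib, prod_fiberwise, mul_inv_cancel]
  · intro f hf
    obtain ⟨v₀⟩ := ‹Nonempty V›
    have hsplit : f = ∏ w, Pi.mulSingle w (f w) / Pi.mulSingle v₀ (f w) := by
      have hsingle := map_prod (MonoidHom.mulSingle (fun _ => C) v₀) f univ
      rw [MonoidHom.mem_ker, piProd_apply] at hf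
      simp only [MonoidHom.mulSingle_apply, hf, Pi.mulSingle_one] at hsingle
      rw [prod_div_distrib, Finset.univ_prod_mulSingle, ← hsingle, div_one]
    rw [hsplit]
    exact prod_mem fun w _ => mulSingle_div_mem_range_boundary (hconn v₀ w) (f w)

theorem range_coboundary_eq_ker_boundary [Fintype V] [Fintype F] [Finite C]
    {vsrc vtgt : E → V} {fsrc ftgt : E → F}
    (hGconn : ∀ a b : V, Relation.ReflTransGen (EdgeAdj vsrc vtgt) a b)
    (hDconn : ∀ a b : F, Relation.ReflTransGen (EdgeAdj fsrc ftgt) a b)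
    (hcirc : ∀ μ : F → C, boundary vsrc vtgt (coboundary fsrc ftgt μ) = 1)
    (hEuler : (Fintype.card V : ℤ) - Fintype.card E + Fintype.card F = 2) :
    (coboundary fsrc ftgt).range = (boundary (C := C) vsrc vtgt).ker := by
  have : Nonempty V := nonempty_of_euler vsrc hDconn hEuler
  have : Nonempty F := nonempty_of_euler fsrc hGconn (by linarith)
  refine Subgroup.eq_of_le_of_card_ge (by rintro _ ⟨μ, rfl⟩; exact hcirc μ) ?_
  set q := Nat.card C
  have hq : 0 < q := Nat.card_pos
  have hF : q * Nat.card (coboundary (C := C) fsrc ftgt).range = q ^ Fintype.card F := by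
    have hker : Nat.card (coboundary (C := C) fsrc ftgt).ker = q := card_ker_coboundary hDconn
    rw [← hker, MonoidHom.card_ker_mul_card_range, Nat.card_fun,
      Nat.card_eq_fintype_card (α := F), hker]
  have hE : Nat.card (boundary (C := C) vsrc vtgt).ker * Nat.card (piProd V C).ker =
      q ^ Fintype.card E := by
    rw [← range_boundary hGconn, MonoidHom.card_ker_mul_card_range, Nat.card_fun,
      Nat.card_eq_fintype_card (α := E)]
  have hV := card_ker_piProd_mul (V := V) (C := C)
  have hcards : Nat.card (boundary (C := C) vsrc vtgt).ker * (Nat.card (piProd V C).ker * q * q) =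
      Nat.card (coboundary (C := C) fsrc ftgt).range * (Nat.card (piProd V C).ker * q * q) := by
    calc _ = q ^ Fintype.card E * q ^ 2 := by rw [← hE]; ring
      _ = q ^ Fintype.card V * q ^ Fintype.card F := by
        rw [← pow_add, ← pow_add]; congr 1; omega
      _ = _ := by rw [← hV, ← hF]; ring
  exact (Nat.eq_of_mul_eq_mul_right (Nat.mul_pos (Nat.mul_pos Nat.card_pos hq) hq) hcards).le

theorem prod_apply_eq_prod_apply_boundary {X M : Type*} [MulOneClass X] [CommGroup M]
    [Fintype V] (src tgt : E → V) (ε : E → X →* M) (σ : V → X) :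
    ∏ e, (ε e (σ (src e)))⁻¹ * ε e (σ (tgt e)) = ∏ v, boundary src tgt ε v (σ v) := by
  have hfiber (g : E → V) :
      ∏ v, ∏ e ∈ univ.filter (g · = v), ε e (σ v) = ∏ e, ε e (σ (g e)) := by
    rw [← prod_fiberwise univ g]
    exact prod_congr rfl fun v _ => prod_congr rfl fun e he => by rw [(mem_filter.mp he).2]
  simp only [boundary, MonoidHom.coe_mk, OneHom.coe_mk, MonoidHom.mul_apply,
    MonoidHom.inv_apply, MonoidHom.finsetProd_apply, prod_mul_distrib, prod_inv_distrib, hfiber]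
  exact mul_comm _ _

end Cochains

section Characters

variable {X : Type*} [CommGroup X] [Fintype X]

theorem conj_apply_char (χ : X →* ℂˣ) (x : X) : conj (χ x : ℂ) = ((χ x)⁻¹ : ℂˣ) := by
  have hpow : (χ x : ℂ) ^ Fintype.card X = 1 := by
    rw [← Units.val_pow_eq_pow_val, ← map_pow, pow_card_eq_one, map_one, Units.val_one]
  rw [Units.val_inv_eq_inv_val,
    Complex.inv_eq_conj (Complex.norm_eq_one_of_pow_eq_one hpow Fintype.card_ne_zero)]

theorem card_char [Fintype (X →* ℂˣ)] : Fintype.card (X →* ℂˣ) = Fintype.card X := by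
  have : NeZero (Monoid.exponent X : ℂ) := ⟨Nat.cast_ne_zero.mpr Monoid.exponent_ne_zero_of_finite⟩
  simpa [Nat.card_eq_fintype_card] using
    CommGroup.card_monoidHom_of_hasEnoughRootsOfUnity X ℂ

theorem sum_apply_char (χ : X →* ℂˣ) [Decidable (χ = 1)] :
    ∑ x, (χ x : ℂ) = if χ = 1 then (Fintype.card X : ℂ) else 0 := by
  split_ifs with h
  · simp [h]
  · refine sum_hom_units_eq_zero ((Units.coeHom ℂ).comp χ) fun h' => h ?_
    ext x
    simpa using DFunLike.congr_fun h' x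

theorem sum_prod_apply_char {V : Type*} [Fintype V] [DecidableEq V] [DecidableEq (X →* ℂˣ)]
    (χ : V → X →* ℂˣ) :
    ∑ σ : V → X, ∏ v, (χ v (σ v) : ℂ) =
      if χ = 1 then (Fintype.card X : ℂ) ^ Fintype.card V else 0 := by
  rw [← Fintype.prod_sum fun v x => (χ v x : ℂ)]
  simp only [sum_apply_char, prod_ite_zero, prod_const, card_univ, mem_univ, true_implies,
    funext_iff, Pi.one_apply]

theorem sum_prod_eq_sum_ker_boundary {V E : Type*} [Fintype V] [DecidableEq V] [Fintype E]
    [DecidableEq E] [Fintype (X →* ℂˣ)] [DecidableEq (X →* ℂˣ)] (src tgt : E → V)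
    (K : E → Matrix X X ℂ) (w : E → (X →* ℂˣ) → ℂ)
    (hK : ∀ e x y, K e x y =
      (Fintype.card X : ℂ)⁻¹ * ∑ χ : X →* ℂˣ, w e χ * conj (χ x : ℂ) * (χ y : ℂ)) :
    ∑ σ : V → X, ∏ e, K e (σ (src e)) (σ (tgt e)) =
      (Fintype.card X : ℂ)⁻¹ ^ Fintype.card E * (Fintype.card X : ℂ) ^ Fintype.card V *
        ∑ ε ∈ univ.filter (boundary src tgt · = 1), ∏ e, w e (ε e) := by
  set q := (Fintype.card X : ℂ)
  have hexpand (σ : V → X) : ∏ e, K e (σ (src e)) (σ (tgt e)) = q⁻¹ ^ Fintype.card E *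
      ∑ ε : E → X →* ℂˣ, (∏ e, w e (ε e)) * ∏ v, (boundary src tgt ε v (σ v) : ℂ) := by
    simp only [hK, conj_apply_char, prod_mul_distrib, prod_const, card_univ]
    rw [Fintype.prod_sum]
    congr 1
    refine sum_congr rfl fun ε _ => ?_
    rw [← Units.coe_prod, ← prod_apply_eq_prod_apply_boundary src tgt ε σ, Units.coe_prod,
      ← prod_mul_distrib]
    simp only [Units.val_mul, mul_assoc]
  calc ∑ σ : V → X, ∏ e, K e (σ (src e)) (σ (tgt e))
      = q⁻¹ ^ Fintype.card E * ∑ ε : E → X →* ℂˣ, (∏ e, w e (ε e)) *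
          ∑ σ : V → X, ∏ v, (boundary src tgt ε v (σ v) : ℂ) := by
        simp only [hexpand, ← mul_sum]
        rw [sum_comm]
        simp only [← mul_sum]
    _ = _ := by
        simp only [sum_prod_apply_char, mul_ite, mul_zero, ← sum_filter, ← sum_mul]
        ring

end Characters

end OrderZeroDuality

theorem stmt_18_general (X : Type*) [CommGroup X] [Fintype X]
    [Fintype (X →* ℂˣ)]
    (V E F : Type*) [Fintype V] [Fintype E] [Fintype F]
    [DecidableEq V] [DecidableEq F]
    (d : ℕ)
    (A : Fin (d + 1) → Matrix X X ℂ)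
    (Pch : (X →* ℂˣ) → Fin (d + 1) → ℂ)
    (hA : ∀ (i : Fin (d + 1)) (x y : X), A i x y = (Fintype.card X : ℂ)⁻¹ *
      ∑ ε : X →* ℂˣ, Pch ε i * conj ((ε x : ℂˣ) : ℂ) * ((ε y : ℂˣ) : ℂ))
    (Estar : Fin (d + 1) → Matrix (X →* ℂˣ) (X →* ℂˣ) ℂ)
    (hEstar : ∀ (i : Fin (d + 1)) (ε η : X →* ℂˣ),
      Estar i ε η = (Fintype.card X : ℂ)⁻¹ * Pch (η * ε⁻¹) i)
    (eh et : E → V) (fh ft : E → F) (lam : E → Fin (d + 1))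
    (hGconn : ∀ a b : V, Relation.ReflTransGen
      (fun u w => ∃ e, (et e = u ∧ eh e = w) ∨ (et e = w ∧ eh e = u)) a b)
    (hDconn : ∀ a b : F, Relation.ReflTransGen
      (fun u w => ∃ e, (ft e = u ∧ fh e = w) ∨ (ft e = w ∧ fh e = u)) a b)
    (hcirc : ∀ (μ : F → (X →* ℂˣ)) (v : V),
      (∏ e ∈ Finset.univ.filter fun e => eh e = v, μ (fh e) * (μ (ft e))⁻¹)⁻¹ *
        ∏ e ∈ Finset.univ.filter fun e => et e = v, μ (fh e) * (μ (ft e))⁻¹ = 1)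
    (hEuler : (Fintype.card V : ℤ) - Fintype.card E + Fintype.card F = 2) :
    ∑ σ : V → X, ∏ e, A (lam e) (σ (et e)) (σ (eh e)) =
      (Fintype.card X : ℂ) ^ ((Fintype.card V : ℤ) - 1) *
        ∑ μ : F → (X →* ℂˣ), ∏ e, Estar (lam e) (μ (ft e)) (μ (fh e)) := by
  classical
  have : Nonempty F := OrderZeroDuality.nonempty_of_euler fh hGconn (by linarith)
  have hexact := OrderZeroDuality.range_coboundary_eq_ker_boundary hGconn hDconn
    (fun μ => funext fun v => mul_inv_eq_one.mpr (inv_mul_eq_one.mp (hcirc μ v))) hEuler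
  have hdual : ∑ μ : F → X →* ℂˣ, ∏ e, Pch (μ (fh e) * (μ (ft e))⁻¹) (lam e) =
      Fintype.card X * ∑ ε ∈ univ.filter (OrderZeroDuality.boundary et eh · = 1),
        ∏ e, Pch (ε e) (lam e) := by
    refine (MonoidHom.sum_comp_eq_card_ker_smul (G := F → X →* ℂˣ)
      (OrderZeroDuality.coboundary ft fh) fun ε : E → X →* ℂˣ => ∏ e, Pch (ε e) (lam e)).trans ?_
    rw [OrderZeroDuality.card_ker_coboundary hDconn, Nat.card_eq_fintype_card,
      OrderZeroDuality.card_char, nsmul_eq_mul]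
    congr 2
    ext ε
    simp only [mem_filter, mem_univ, true_and, hexact, MonoidHom.mem_ker]
  rw [OrderZeroDuality.sum_prod_eq_sum_ker_boundary et eh (fun e => A (lam e))
    (fun e χ => Pch χ (lam e)) fun e => hA (lam e)]
  simp only [hEstar, prod_mul_distrib, prod_const, card_univ, ← mul_sum, hdual]
  rw [zpow_sub_one₀ (Nat.cast_ne_zero.mpr Fintype.card_ne_zero), zpow_natCast]
  field_simp

/-- (Order-zero duality, generalizing Jaeger.) Let `(X, R)` be a
translation association scheme on a finite abelian group `X`, with adjacency matrices
`(A i) x y = |X|⁻¹ ∑ ε, Pch ε i * conj (ε x) * ε y`, and let the primitive idempotents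
of the dual scheme `(X^*, R^*)` be `(Estar i) ε η = |X|⁻¹ * Pch (η ε⁻¹) i`. Let `G` be
a weakly connected plane digraph with vertex set `V`, edge set `E` (head/tail `eh, et`),
face set `F`, and dual edges running from `ft e` to `fh e` (rotation of `e` by 90°
clockwise); the planar structure is encoded by connectivity of `G` and of the dual,
the circulation property of face potentials, and Euler's formula. Then the order-0
scaffold `S = ∑_{σ : V → X} ∏ e, A (lam e) (σ (et e)) (σ (eh e))` with `n = |V|` nodes
satisfies `S = |X|^{n-1} S†`, where
`S† = ∑_{μ : F → X^*} ∏ e, Estar (lam e) (μ (ft e)) (μ (fh e))` is the dual scaffold. -/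
theorem stmt_18 (X : Type*) [CommGroup X] [Fintype X]
    [Fintype (X →* ℂˣ)] [DecidableEq (X →* ℂˣ)]
    (V E F : Type*) [Fintype V] [Fintype E] [Fintype F]
    [DecidableEq V] [DecidableEq E] [DecidableEq F]
    (d : ℕ)
    (A : Fin (d + 1) → Matrix X X ℂ)
    (h01 : ∀ i x y, A i x y = 0 ∨ A i x y = 1)
    (Pch : (X →* ℂˣ) → Fin (d + 1) → ℂ)
    (hA : ∀ (i : Fin (d + 1)) (x y : X), A i x y = (Fintype.card X : ℂ)⁻¹ *
      ∑ ε : X →* ℂˣ, Pch ε i * conj ((ε x : ℂˣ) : ℂ) * ((ε y : ℂˣ) : ℂ))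
    (Estar : Fin (d + 1) → Matrix (X →* ℂˣ) (X →* ℂˣ) ℂ)
    (hEstar : ∀ (i : Fin (d + 1)) (ε η : X →* ℂˣ),
      Estar i ε η = (Fintype.card X : ℂ)⁻¹ * Pch (η * ε⁻¹) i)
    (eh et : E → V) (fh ft : E → F) (lam : E → Fin (d + 1))
    (hGconn : ∀ a b : V, Relation.ReflTransGen
      (fun u w => ∃ e, (et e = u ∧ eh e = w) ∨ (et e = w ∧ eh e = u)) a b)
    (hDconn : ∀ a b : F, Relation.ReflTransGen
      (fun u w => ∃ e, (ft e = u ∧ fh e = w) ∨ (ft e = w ∧ fh e = u)) a b)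
    (hcirc : ∀ (μ : F → (X →* ℂˣ)) (v : V),
      (∏ e ∈ Finset.univ.filter fun e => eh e = v, μ (fh e) * (μ (ft e))⁻¹)⁻¹ *
        ∏ e ∈ Finset.univ.filter fun e => et e = v, μ (fh e) * (μ (ft e))⁻¹ = 1)
    (hEuler : (Fintype.card V : ℤ) - Fintype.card E + Fintype.card F = 2) :
    ∑ σ : V → X, ∏ e, A (lam e) (σ (et e)) (σ (eh e)) =
      (Fintype.card X : ℂ) ^ ((Fintype.card V : ℤ) - 1) *
        ∑ μ : F → (X →* ℂˣ), ∏ e, Estar (lam e) (μ (ft e)) (μ (fh e)) :=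
  stmt_18_general X V E F d A Pch hA Estar hEstar eh et fh ft lam hGconn hDconn hcirc hEuler
end
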